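/- arXiv:2108.09570 — 3 statements merged into one kernel-verified Lean document; each statement's English description precedes it below -/
import Mathlib

section
/- For all natural numbers n ≥ 3, the n-th prime p_n satisfies p_n < 2 n log n. -/
open Filter

/-- The `n`-th prime number, with `nthPrime 1 = 2`. -/
noncomputable def nthPrime (n : ℕ) : ℕ := Nat.nth Nat.Prime (n - 1)

/-!
For `n ≥ 2 ^ 10`, Chebyshev's bound `π x ≥ ((x - 1) log 2 - log (x + 2)) / log x` at
`x = 2 n log n` exceeds `n`, so even `p_{n+1} ≤ x`. This needs `(2 log 2 - 1) log n` to beat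
`log 2 + 1 + log log n`, which first happens near `n = 2 ^ 10`. For `3 ≤ n < 2 ^ 10` (primes up
to `8161`) a kernel computation checks the stronger `3 ^ p_n ≤ n ^ (2 n)`, i.e.
`p_n log 3 ≤ 2 n log n`.
-/

open scoped Nat.Prime

def oddTrialDivision (n : ℕ) : ℕ → ℕ → Bool
  | 0, _ => true
  | fuel + 1, d => n < d * d || (n % d != 0 && oddTrialDivision n fuel (d + 2))

theorem oddTrialDivision_iff {n : ℕ} : ∀ {fuel d : ℕ}, oddTrialDivision n fuel d = true ↔
    ∀ k < fuel, (d + 2 * k) * (d + 2 * k) ≤ n → ¬d + 2 * k ∣ n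
  | 0, d => by simp [oddTrialDivision]
  | fuel + 1, d => by
    simp only [oddTrialDivision, Bool.or_eq_true, decide_eq_true_eq, Bool.and_eq_true,
      bne_iff_ne, ne_eq, ← Nat.dvd_iff_mod_eq_zero, oddTrialDivision_iff]
    constructor
    · rintro (hlt | ⟨hd, hrest⟩) (_ | k) hk hle
      · nlinarith
      · nlinarith
      · simpa using hd
      · rw [show d + 2 * (k + 1) = d + 2 + 2 * k by ring] at hle ⊢
        exact hrest k (by omega) hle
    · intro h
      refine (lt_or_ge n (d * d)).imp id fun hle => ⟨by simpa using h 0 (by omega) (by simpa), ?_⟩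
      intro k hk
      rw [show d + 2 + 2 * k = d + 2 * (k + 1) by ring]
      exact h (k + 1) (by omega)

def isPrimeByTrialDivision (n : ℕ) : Bool :=
  n == 2 || (2 < n && n % 2 == 1 && oddTrialDivision n n 3)

theorem isPrimeByTrialDivision_iff {n : ℕ} : isPrimeByTrialDivision n = true ↔ n.Prime := by
  simp only [isPrimeByTrialDivision, Bool.or_eq_true, beq_iff_eq, Bool.and_eq_true,
    decide_eq_true_eq, oddTrialDivision_iff]
  constructor
  · rintro (rfl | ⟨⟨h2, hodd⟩, hdiv⟩)
    · exact Nat.prime_two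
    by_contra hnp
    have hmin : n.minFac.Prime := Nat.minFac_prime (by omega)
    have hsq : n.minFac * n.minFac ≤ n := by simpa [sq] using Nat.minFac_sq_le_self (by omega) hnp
    have hle := n.minFac_le (by omega)
    have hdvd := n.minFac_dvd
    have hmin_odd : n.minFac % 2 = 1 := by
      rcases hmin.eq_two_or_odd with h | h
      · rw [h] at hdvd; omega
      · exact h
    obtain ⟨k, hk⟩ : ∃ k, n.minFac = 3 + 2 * k :=
      ⟨(n.minFac - 3) / 2, by have := hmin.two_le; omega⟩
    rw [hk] at hsq hle hdvd
    exact hdiv k (by omega) hsq hdvd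
  · intro hp
    rcases hp.eq_two_or_odd with rfl | hodd
    · simp
    refine Or.inr ⟨⟨lt_of_le_of_ne hp.two_le (by rintro rfl; simp at hodd), hodd⟩, ?_⟩
    intro k _ hle hdvd
    rcases hp.eq_one_or_self_of_dvd _ hdvd with h | h
    · omega
    · rw [h] at hle
      nlinarith [hp.two_le]

section CheckNth

variable (p : ℕ → Prop) [DecidablePred p] (ok : ℕ → ℕ → Prop) [DecidableRel ok] (K : ℕ)

/-- Scans `m, m + 1, …` keeping `c = count p m`; fails if `fuel` runs out before `c = K`. -/
def checkNth : ℕ → ℕ → ℕ → Bool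
  | 0, _, _ => false
  | fuel + 1, m, c =>
    if K ≤ c then true
    else if p m then decide (ok c m) && checkNth fuel (m + 1) (c + 1)
    else checkNth fuel (m + 1) c

variable {p ok K}

theorem forall_nth_of_checkNth : ∀ {fuel m : ℕ}, checkNth p ok K fuel m (Nat.count p m) = true →
    ∀ i, Nat.count p m ≤ i → i < K → ok i (Nat.nth p i)
  | 0, _, h => by simp [checkNth] at h
  | fuel + 1, m, h => by
    intro i hi hiK
    rw [checkNth] at h
    split_ifs at h with hK hpm
    · omega
    · rw [Bool.and_eq_true, decide_eq_true_eq] at h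
      rcases hi.eq_or_lt with rfl | hlt
      · rw [Nat.nth_count hpm]
        exact h.1
      · have hc : Nat.count p (m + 1) = Nat.count p m + 1 := by simp [Nat.count_succ, hpm]
        exact forall_nth_of_checkNth (hc ▸ h.2) i (by omega) hiK
    · have hc : Nat.count p (m + 1) = Nat.count p m := by simp [Nat.count_succ, hpm]
      exact forall_nth_of_checkNth (hc ▸ h) i (by omega) hiK

end CheckNth

theorem three_pow_nthPrime_le {n : ℕ} (h3 : 3 ≤ n) (h : n < 2 ^ 10) :
    3 ^ nthPrime n ≤ n ^ (2 * n) := by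
  -- `Nat.decidablePrime` tries every divisor below `p`; this instance stops at `√p`.
  let _ : DecidablePred Nat.Prime := fun _ => decidable_of_iff _ isPrimeByTrialDivision_iff
  have hcheck : checkNth Nat.Prime (fun i q => 2 ≤ i → 3 ^ q ≤ (i + 1) ^ (2 * (i + 1)))
      (2 ^ 10 - 1) 8200 0 (Nat.count Nat.Prime 0) = true := by
    decide +kernel
  obtain ⟨k, rfl⟩ : ∃ k, n = k + 1 := ⟨n - 1, by omega⟩
  exact forall_nth_of_checkNth hcheck k (by simp) (by omega) (by omega)

theorem lt_two_mul_mul_log_of_three_pow_le {q n : ℕ} (hq : 0 < q) (h : 3 ^ q ≤ n ^ (2 * n)) :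
    (q : ℝ) < 2 * n * Real.log n := by
  have hlog3 : 1 < Real.log 3 := by
    rw [Real.lt_log_iff_exp_lt (by norm_num)]
    exact Real.exp_one_lt_d9.trans (by norm_num)
  have hlog : (q : ℝ) * Real.log 3 ≤ 2 * n * Real.log n := by
    have := Real.log_le_log (by positivity) (by exact_mod_cast h : (3 : ℝ) ^ q ≤ (n : ℝ) ^ (2 * n))
    simpa [Real.log_pow, mul_assoc] using this
  have : (0 : ℝ) < q := by exact_mod_cast hq
  nlinarith

theorem nthPrime_lt_of_lt_primeCounting {n : ℕ} {x : ℝ} (hn : 1 ≤ n) (h : n < π ⌊x⌋₊) :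
    (nthPrime n : ℝ) < x := by
  have hnext : Nat.nth Nat.Prime n ≤ ⌊x⌋₊ := Nat.lt_succ_iff.mp (Nat.nth_lt_of_lt_count h)
  have hlt : nthPrime n < Nat.nth Nat.Prime n :=
    Nat.nth_strictMono Nat.infinite_setOfPred_prime (by omega)
  calc (nthPrime n : ℝ) < Nat.nth Nat.Prime n := by exact_mod_cast hlt
    _ ≤ x := (Nat.le_floor_iff' (Nat.prime_nth_prime n).ne_zero).mp hnext

theorem Real.exp_neg_two_lt : Real.exp (-2) < 0.1355 := by
  have h2 : 7.385 < Real.exp 2 := by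
    rw [show (2 : ℝ) = 1 + 1 by norm_num, Real.exp_add]
    nlinarith [Real.exp_one_gt_d9]
  have : Real.exp (-2) * Real.exp 2 = 1 := by rw [← Real.exp_add]; norm_num
  nlinarith [Real.exp_pos (-2)]

theorem Real.log_le_one_add_mul_exp_neg_two {y : ℝ} (hy : 0 < y) :
    Real.log y ≤ 1 + y * Real.exp (-2) := by
  have := Real.log_le_sub_one_of_pos (mul_pos hy (Real.exp_pos (-2)))
  rw [Real.log_mul hy.ne' (Real.exp_pos _).ne', Real.log_exp] at this
  linarith

theorem lt_primeCounting_two_mul_mul_log {n : ℕ} (hn : 2 ^ 10 ≤ n) :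
    n < π ⌊2 * n * Real.log n⌋₊ := by
  set L := Real.log n
  set x : ℝ := 2 * n * L
  have hn' : (2 : ℝ) ^ 10 ≤ n := by exact_mod_cast hn
  have hlog2_gt := Real.log_two_gt_d9
  have hlog2_lt := Real.log_two_lt_d9
  have hL : 10 * Real.log 2 ≤ L := by
    simpa [Real.log_pow] using Real.log_le_log (by norm_num) hn'
  have hL' : L ≤ 10 * Real.log 2 - 1 + n / 2 ^ 10 := by
    have := Real.log_le_sub_one_of_pos (show 0 < (n : ℝ) / 2 ^ 10 by positivity)
    rw [Real.log_div (by positivity) (by norm_num), Real.log_pow, Nat.cast_ofNat] at this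
    linarith
  have hLpos : 0 < L := by linarith
  have hlogx : Real.log x = Real.log 2 + L + Real.log L := by
    rw [Real.log_mul (by positivity) hLpos.ne', Real.log_mul (by norm_num) (by positivity)]
  have hlogx2 : Real.log (x + 2) ≤ 2 * L := by
    have : x + 2 ≤ (n : ℝ) ^ 2 := by
      nlinarith [mul_le_mul_of_nonneg_left hL' (by positivity : (0 : ℝ) ≤ n)]
    calc _ ≤ Real.log ((n : ℝ) ^ 2) := Real.log_le_log (by positivity) this
      _ = 2 * L := by rw [Real.log_pow]; push_cast; ring
  have hx1 : 1 < x := by nlinarith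
  have : (n : ℝ) < ((x - 1) * Real.log 2 - Real.log (x + 2)) / Real.log x := by
    rw [lt_div_iff₀ (Real.log_pos hx1), hlogx]
    -- at `n = 2 ^ 10` the two sides differ by only about `0.05 n`
    nlinarith [mul_le_mul_of_nonneg_left (Real.log_le_one_add_mul_exp_neg_two hLpos)
      (by positivity : (0 : ℝ) ≤ n), Real.exp_neg_two_lt]
  exact_mod_cast this.trans_le (Chebyshev.pi_ge' hx1)

theorem nthPrime_lt (n : ℕ) (hn : 3 ≤ n) :
    (nthPrime n : ℝ) < 2 * n * Real.log n := by
  rcases lt_or_ge n (2 ^ 10) with hsmall | hlarge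
  · exact lt_two_mul_mul_log_of_three_pow_le (Nat.prime_nth_prime _).pos
      (three_pow_nthPrime_le hn hsmall)
  · exact nthPrime_lt_of_lt_primeCounting (by omega) (lt_primeCounting_two_mul_mul_log hlarge)
end

section
/- Assume the Riemann Hypothesis and Schoenfeld's bound. Then for all natural numbers n ≥ 2657, √(li^{-1}(n)) − √(p_n) < (√2/(16π)) · (log(2n log n))². -/
/-!
Put `x = li⁻¹(n)` and `p = p_n`, so that `π(p) = n = li x`; only `x > p` needs an argument.
Since `li' = 1 / log`, the mean value theorem gives `x - p ≤ (li x - li p) log x`, and Schoenfeld's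
bound at `p` reads `li x - li p = π(p) - li p < √p log p / (8π)`. The mean value theorem for `√`
then gives `√x - √p ≤ (x - p) / (2√p) < log p · log x / (16π)`, and both logarithms are at most
`log (2 n log n)` because `x - 2 ≤ n log x` forces `x ≤ 2 n log n`.
-/

open Filter

/-- Principal value logarithmic integral from 0: `li x = p.v. ∫ t in 0..x, dt / log t`. -/
noncomputable def li (x : ℝ) : ℝ :=
  limUnder (nhdsWithin 0 (Set.Ioi (0:ℝ))) fun ε : ℝ =>
    (∫ t in (0:ℝ)..(1 - ε), 1 / Real.log t) + ∫ t in (1 + ε)..x, 1 / Real.log t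

/-- Inverse of the logarithmic integral `li` (on its increasing branch). -/
noncomputable def liInv : ℝ → ℝ := Function.invFun li

/-- Prime counting function on the reals: number of primes `≤ x`. -/
noncomputable def primePi (x : ℝ) : ℕ := Nat.primeCounting ⌊x⌋₊

open Real Set Topology MeasureTheory intervalIntegral

/-- `1 / log t` minus its pole at `t = 1`; it is bounded on `[0, ∞)`, which turns the principal
value defining `li` into an ordinary integral plus `log (x - 1)`. -/
noncomputable def regLogInv (t : ℝ) : ℝ := 1 / log t - 1 / (t - 1)

lemma regLogInv_mem_Icc {t : ℝ} (ht : 0 ≤ t) : regLogInv t ∈ Icc 0 1 := by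
  rcases ht.eq_or_lt with rfl | ht₀
  · norm_num [regLogInv]
  rcases eq_or_ne t 1 with rfl | ht₁
  · norm_num [regLogInv]
  have hden : 0 < log t * (t - 1) := by
    rcases ht₁.lt_or_gt with h | h
    · exact mul_pos_of_neg_of_neg (log_neg ht₀ h) (by linarith)
    · exact mul_pos (log_pos h) (by linarith)
  have hlog_le : log t ≤ t - 1 := log_le_sub_one_of_pos ht₀
  have hle_log : t - 1 ≤ t * log t := by
    have := one_sub_inv_le_log_of_pos ht₀
    calc t - 1 = t * (1 - t⁻¹) := by field_simp
      _ ≤ t * log t := by gcongr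
  have heq : regLogInv t = (t - 1 - log t) / (log t * (t - 1)) := by
    obtain ⟨hl, hs⟩ := mul_ne_zero_iff.mp hden.ne'
    unfold regLogInv
    field_simp
  rw [heq, mem_Icc, div_le_one hden]
  exact ⟨div_nonneg (by linarith) hden.le, by nlinarith⟩

lemma norm_regLogInv_le_one {t : ℝ} (ht : 0 ≤ t) : ‖regLogInv t‖ ≤ 1 := by
  obtain ⟨h₀, h₁⟩ := regLogInv_mem_Icc ht
  rwa [norm_of_nonneg h₀]

lemma intervalIntegrable_regLogInv {a b : ℝ} (ha : 0 ≤ a) (hb : 0 ≤ b) :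
    IntervalIntegrable regLogInv volume a b := by
  refine (intervalIntegrable_const (c := (1 : ℝ))).mono_fun' (by unfold regLogInv; fun_prop) ?_
  filter_upwards [ae_restrict_mem measurableSet_uIoc] with t ht
  exact norm_regLogInv_le_one ((le_min ha hb).trans (uIoc_subset_uIcc ht).1)

lemma integral_one_div_log {a b : ℝ} (ha : 0 ≤ a) (hb : 0 ≤ b) (h₁ : (1 : ℝ) ∉ uIcc a b) :
    ∫ t in a..b, 1 / log t = (∫ t in a..b, regLogInv t) + log ((b - 1) / (a - 1)) := by
  have h₀ : (0 : ℝ) ∉ uIcc (a - 1) (b - 1) := by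
    rwa [← sub_self 1, ← mem_preimage (f := fun x => x - 1), preimage_sub_const_uIcc,
      sub_add_cancel, sub_add_cancel]
  have hint : IntervalIntegrable (fun t => 1 / (t - 1)) volume a b :=
    (continuousOn_const.div (by fun_prop) fun t ht =>
      sub_ne_zero.mpr (ne_of_mem_of_not_mem ht h₁)).intervalIntegrable
  rw [← integral_one_div h₀, ← integral_comp_sub_right (fun t => 1 / t),
    ← integral_add (intervalIntegrable_regLogInv ha hb) hint]
  simp [regLogInv]

lemma li_eq_integral_regLogInv_add_log {x : ℝ} (hx : 1 < x) :
    li x = (∫ t in (0 : ℝ)..x, regLogInv t) + log (x - 1) := by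
  set F : ℝ → ℝ := fun u => ∫ t in (0 : ℝ)..u, regLogInv t
  have hF : ContinuousAt F 1 :=
    (continuousOn_primitive_interval' (intervalIntegrable_regLogInv le_rfl (by linarith))
      left_mem_uIcc).continuousAt (by rw [uIcc_of_le (by linarith)]; exact Icc_mem_nhds one_pos hx)
  have hlim : Tendsto (fun ε => F (1 - ε) + (F x - F (1 + ε)) + log (x - 1)) (𝓝[>] 0)
      (𝓝 (F x + log (x - 1))) := by
    have h₁ : ContinuousAt (fun ε : ℝ => F (1 - ε)) 0 :=
      ContinuousAt.comp_of_eq hF (by fun_prop) (by simp)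
    have h₂ : ContinuousAt (fun ε : ℝ => F (1 + ε)) 0 :=
      ContinuousAt.comp_of_eq hF (by fun_prop) (by simp)
    have hc : ContinuousAt (fun ε => F (1 - ε) + (F x - F (1 + ε)) + log (x - 1)) 0 :=
      (h₁.add (continuousAt_const.sub h₂)).add continuousAt_const
    have h := hc.tendsto
    rw [sub_zero, add_zero, add_sub_cancel] at h
    exact h.mono_left nhdsWithin_le_nhds
  have hsplit : ∀ᶠ ε in 𝓝[>] 0,
      F (1 - ε) + (F x - F (1 + ε)) + log (x - 1) =
        (∫ t in (0 : ℝ)..(1 - ε), 1 / log t) + ∫ t in (1 + ε)..x, 1 / log t := by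
    filter_upwards [Ioo_mem_nhdsGT (show (0 : ℝ) < min 1 (x - 1) by simp [hx])] with ε hε
    obtain ⟨hε₀, hε₁, hεx⟩ : 0 < ε ∧ ε < 1 ∧ ε < x - 1 := ⟨hε.1, lt_min_iff.mp hε.2⟩
    have h₁ : (1 : ℝ) ∉ uIcc 0 (1 - ε) := by
      rw [uIcc_of_le (by linarith)]; exact fun h => by linarith [h.2]
    have h₂ : (1 : ℝ) ∉ uIcc (1 + ε) x := by
      rw [uIcc_of_le (by linarith)]; exact fun h => by linarith [h.1]
    rw [integral_one_div_log le_rfl (by linarith) h₁,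
      integral_one_div_log (by linarith) (by linarith) h₂,
      integral_interval_sub_left (intervalIntegrable_regLogInv le_rfl (by linarith))
        (intervalIntegrable_regLogInv le_rfl (by linarith)),
      show (1 - ε - 1) / (0 - 1) = ε by ring, add_sub_cancel_left, log_div (by linarith) hε₀.ne']
    ring
  exact (hlim.congr' hsplit).limUnder_eq

lemma hasDerivAt_li {y : ℝ} (hy : 1 < y) : HasDerivAt li (1 / log y) y := by
  have hcont : ContinuousAt regLogInv y := by
    have : y ≠ 0 := by linarith
    have : log y ≠ 0 := (log_pos hy).ne'
    have : y - 1 ≠ 0 := by linarith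
    unfold regLogInv
    fun_prop (disch := assumption)
  have hmeas : Measurable regLogInv := by unfold regLogInv; fun_prop
  have hprim : HasDerivAt (fun u => ∫ t in (0 : ℝ)..u, regLogInv t) (regLogInv y) y :=
    integral_hasDerivAt_right (intervalIntegrable_regLogInv le_rfl (by linarith))
      hmeas.stronglyMeasurable.stronglyMeasurableAtFilter hcont
  have hlog : HasDerivAt (fun u => log (u - 1)) (1 / (y - 1)) y := by
    simpa using ((hasDerivAt_id y).sub_const 1).log (sub_ne_zero.mpr hy.ne')
  have hsum := hprim.add hlog
  rw [regLogInv, sub_add_cancel] at hsum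
  refine hsum.congr_of_eventuallyEq ?_
  filter_upwards [Ioi_mem_nhds hy] with u hu
  exact li_eq_integral_regLogInv_add_log hu

lemma continuousOn_li : ContinuousOn li (Ioi 1) :=
  fun _ hy => (hasDerivAt_li hy).continuousAt.continuousWithinAt

lemma log_sub_one_le_li {x : ℝ} (hx : 1 < x) : log (x - 1) ≤ li x := by
  rw [li_eq_integral_regLogInv_add_log hx]
  have := integral_nonneg (μ := volume) (by linarith : (0 : ℝ) ≤ x) fun t ht =>
    (regLogInv_mem_Icc ht.1).1
  linarith

lemma li_two_mem_Icc : li 2 ∈ Icc 0 2 := by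
  rw [li_eq_integral_regLogInv_add_log one_lt_two, show (2 : ℝ) - 1 = 1 by norm_num, log_one,
    add_zero]
  refine ⟨integral_nonneg zero_le_two fun t ht => (regLogInv_mem_Icc ht.1).1, ?_⟩
  calc (∫ t in (0 : ℝ)..2, regLogInv t) ≤ ∫ _ in (0 : ℝ)..2, (1 : ℝ) :=
        integral_mono_on zero_le_two (intervalIntegrable_regLogInv le_rfl zero_le_two)
          intervalIntegrable_const fun t ht => (regLogInv_mem_Icc ht.1).2
    _ = 2 := by simp

lemma exists_li_eq {c : ℝ} (hc : 2 ≤ c) : ∃ x, li x = c := by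
  have h₂ : (2 : ℝ) ≤ exp c + 1 := by linarith [add_one_le_exp c]
  have hc' : c ≤ li (exp c + 1) := by
    simpa using log_sub_one_le_li (by linarith : 1 < exp c + 1)
  obtain ⟨x, -, hx⟩ := intermediate_value_Icc h₂
    (continuousOn_li.mono fun t ht => one_lt_two.trans_le ht.1) ⟨li_two_mem_Icc.2.trans hc, hc'⟩
  exact ⟨x, hx⟩

lemma li_liInv {c : ℝ} (hc : 2 ≤ c) : li (liInv c) = c :=
  Function.invFun_eq (exists_li_eq hc)

lemma sub_le_li_sub_li_mul_log {a b : ℝ} (ha : 1 < a) (hab : a ≤ b) :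
    b - a ≤ (li b - li a) * log b := by
  rcases hab.eq_or_lt with rfl | hab
  · simp
  obtain ⟨c, hc, hslope⟩ := exists_hasDerivAt_eq_slope li (fun t => 1 / log t) hab
    (continuousOn_li.mono fun t ht => ha.trans_le ht.1) fun t ht => hasDerivAt_li (ha.trans ht.1)
  rw [eq_div_iff (sub_pos.mpr hab).ne'] at hslope
  have hlogc : 0 < log c := log_pos (ha.trans hc.1)
  have hli : 0 ≤ li b - li a := by
    rw [← hslope]; exact mul_nonneg (by positivity) (sub_pos.mpr hab).le
  calc b - a = (li b - li a) * log c := by rw [← hslope]; field_simp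
    _ ≤ (li b - li a) * log b := by gcongr; exacts [by linarith [hc.1], hc.2.le]

lemma le_two_mul_log_of_sub_two_le {x y : ℝ} (hx : 0 < x) (hy : 8 ≤ y)
    (h : x - 2 ≤ y * log x) : x ≤ 2 * y * log y := by
  have hy₀ : 0 < y := by linarith
  have hℓ : 1 ≤ log y := by rw [le_log_iff_exp_le hy₀]; linarith [exp_one_lt_d9]
  set ℓ := log y
  set X := 2 * y * ℓ
  have hX : 0 < X := by positivity
  have hlog₂ : log (2 * ℓ) ≤ 3 / 4 * ℓ := by
    have hlog := log_le_sub_one_of_pos (x := 2 * ℓ / exp 1) (by positivity)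
    rw [log_div (by positivity) (exp_pos 1).ne', log_exp] at hlog
    have : 2 * ℓ / exp 1 ≤ 3 / 4 * ℓ := by
      rw [div_le_iff₀ (exp_pos 1)]; nlinarith [exp_one_gt_d9]
    linarith
  have hlogX : log X ≤ 7 / 4 * ℓ := by
    rw [show X = y * (2 * ℓ) by ring, log_mul hy₀.ne' (by positivity)]; linarith
  -- `log` lies below its tangent line at `X`
  have hlogx : log x ≤ log X + x / X - 1 := by
    have hlog := log_le_sub_one_of_pos (div_pos hx hX)
    rw [log_div hx.ne' hX.ne'] at hlog
    linarith
  have hyx : y * (x / X) = x / (2 * ℓ) := by field_simp [X]; ring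
  have hx' : x - 2 ≤ 7 / 4 * y * ℓ + x / (2 * ℓ) - y := by
    nlinarith [mul_le_mul_of_nonneg_left hlogx hy₀.le, mul_le_mul_of_nonneg_left hlogX hy₀.le]
  set u := x / (2 * ℓ)
  have hxu : x = 2 * ℓ * u := by rw [mul_div_cancel₀ _ (by positivity)]
  have hu : (2 * ℓ - 1) * u ≤ (2 * ℓ - 1) * y := by rw [hxu] at hx'; nlinarith
  calc x = 2 * ℓ * u := hxu
    _ ≤ 2 * ℓ * y := by gcongr; exact le_of_mul_le_mul_left hu (by linarith)
    _ = 2 * y * ℓ := by ring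

lemma le_two_mul_log_of_li_le {x y : ℝ} (hx : 1 < x) (hy : 8 ≤ y) (hxy : li x ≤ y) :
    x ≤ 2 * y * log y := by
  refine le_two_mul_log_of_sub_two_le (by linarith) hy ?_
  have hlogx : 0 ≤ log x := log_nonneg hx.le
  rcases le_or_gt x 2 with hx₂ | hx₂
  · linarith [mul_nonneg (by linarith : (0 : ℝ) ≤ y) hlogx]
  calc x - 2 ≤ (li x - li 2) * log x := sub_le_li_sub_li_mul_log one_lt_two hx₂.le
    _ ≤ y * log x := by gcongr; linarith [li_two_mem_Icc.1]

lemma sqrt_sub_sqrt_le_div {a b : ℝ} (ha : 0 < a) (hb : 0 ≤ b) :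
    √b - √a ≤ (b - a) / (2 * √a) := by
  have hsa := sqrt_pos.mpr ha
  rw [le_div_iff₀ (by positivity)]
  nlinarith [sq_sqrt ha.le, sq_sqrt hb, sq_nonneg (√b - √a)]

lemma le_nthPrime (n : ℕ) : n ≤ nthPrime n := by
  have := Nat.add_two_le_nth_prime (n - 1)
  unfold nthPrime
  omega

lemma primePi_nthPrime {n : ℕ} (hn : 1 ≤ n) : primePi (nthPrime n) = n := by
  rw [primePi, Nat.floor_natCast, nthPrime, Nat.primeCounting, Nat.primeCounting', Nat.count_succ,
    ← Nat.primeCounting', Nat.primeCounting'_nth_eq, if_pos (Nat.prime_nth_prime _)]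
  omega

theorem sqrt_liInv_sub_sqrt_nthPrime_general
    (hSchoenfeld : ∀ x : ℝ, 2657 ≤ x →
      |(primePi x : ℝ) - li x| < Real.sqrt x * Real.log x / (8 * Real.pi))
    (n : ℕ) (hn : 2657 ≤ n) :
    Real.sqrt (liInv n) - Real.sqrt (nthPrime n)
      < Real.sqrt 2 / (16 * Real.pi) * (Real.log (2 * n * Real.log n))^2 := by
  have hn' : (2657 : ℝ) ≤ n := by exact_mod_cast hn
  have hp : (2657 : ℝ) ≤ nthPrime n := by exact_mod_cast hn.trans (le_nthPrime n)
  have hπp : (primePi (nthPrime n) : ℝ) = n := by rw [primePi_nthPrime (by omega)]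
  have hlogn : 1 ≤ log n := by rw [le_log_iff_exp_le (by linarith)]; linarith [exp_one_lt_d9]
  set x := liInv n
  set p : ℝ := (nthPrime n : ℝ)
  set L := log (2 * n * log n)
  have hL : 0 < L := log_pos (by nlinarith)
  rcases le_or_gt x p with hxp | hpx
  · linarith [sqrt_le_sqrt hxp, (by positivity : 0 < √2 / (16 * π) * L ^ 2)]
  have hlix : li x = n := li_liInv (by linarith)
  have hgap : li x - li p < √p * log p / (8 * π) := by
    simpa [hπp, hlix] using (abs_lt.mp (hSchoenfeld p hp)).2
  have hx : x ≤ 2 * n * log n := le_two_mul_log_of_li_le (by linarith) (by linarith) hlix.le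
  have hlogx : log x ≤ L := log_le_log (by linarith) hx
  have hlogp : log p ≤ L := (log_le_log (by linarith) hpx.le).trans hlogx
  calc √x - √p ≤ (x - p) / (2 * √p) := sqrt_sub_sqrt_le_div (by linarith) (by linarith)
    _ ≤ (li x - li p) * log x / (2 * √p) := by
      gcongr; exact sub_le_li_sub_li_mul_log (by linarith) hpx.le
    _ < √p * log p / (8 * π) * log x / (2 * √p) := by gcongr; exact log_pos (by linarith)
    _ = log p * log x / (16 * π) := by field_simp; ring
    _ ≤ L * L / (16 * π) := by gcongr; exact log_nonneg (by linarith)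
    _ ≤ √2 / (16 * π) * L ^ 2 := by
      rw [div_mul_eq_mul_div, ← sq]
      gcongr
      exact le_mul_of_one_le_left (sq_nonneg L) one_lt_sqrt_two.le

theorem sqrt_liInv_sub_sqrt_nthPrime (hRH : RiemannHypothesis)
    (hSchoenfeld : ∀ x : ℝ, 2657 ≤ x →
      |(primePi x : ℝ) - li x| < Real.sqrt x * Real.log x / (8 * Real.pi))
    (n : ℕ) (hn : 2657 ≤ n) :
    Real.sqrt (liInv n) - Real.sqrt (nthPrime n)
      < Real.sqrt 2 / (16 * Real.pi) * (Real.log (2 * n * Real.log n))^2 :=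
  sqrt_liInv_sub_sqrt_nthPrime_general hSchoenfeld n hn
end

section
/- For all natural numbers n ≥ 3, li^{-1}(n) < 2 n log n, equivalently li(2 n log n) > n. -/
open Filter

/-!
Folding the principal value about the singularity at `1` (substitute `t = 2 - s` on `(0, 1)`)
gives, for `x ≥ 2`, `li x = ∫ s in 1..2, (1 / log s + 1 / log (2 - s)) + ∫ t in 2..x, 1 / log t`.
The folded integrand lies between `1` and `3` on `(1, 2)`, so `1 ≤ li 2 ≤ 3`, and `li`
is continuous and increasing on `[2, ∞)` with `li x ≥ 1 + (x - 2) / log x`. At `x = 2 n log n`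
this exceeds `n`; by the intermediate value theorem `n` is a value of `li` on `[2, 2 n log n]`,
so `liInv n` is a preimage of `n`, and monotonicity puts it below `2 n log n`.
-/

open Real Set MeasureTheory Filter Topology

lemma monotoneOn_of_hasDerivAt_nonneg {D : Set ℝ} (hD : Convex ℝ D) {f f' : ℝ → ℝ}
    (hf : ∀ x ∈ D, HasDerivAt f (f' x) x) (hf' : ∀ x ∈ interior D, 0 ≤ f' x) :
    MonotoneOn f D :=
  monotoneOn_of_hasDerivWithinAt_nonneg hD
    (fun x hx => (hf x hx).continuousAt.continuousWithinAt)
    (fun x hx => (hf x (interior_subset hx)).hasDerivWithinAt) hf'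

lemma mul_log_one_add_sub_mul_log_one_sub_le {u : ℝ} (hu : u ∈ Ico 0 1) :
    (1 + u) * log (1 + u) - (1 - u) * log (1 - u) ≤ 2 * u := by
  have hderiv : ∀ v ∈ Ico (0 : ℝ) 1, HasDerivAt
      (fun v => 2 * v - ((1 + v) * log (1 + v) - (1 - v) * log (1 - v)))
      (-(log (1 + v) + log (1 - v))) v := by
    intro v hv
    have hplus := (hasDerivAt_mul_log (by linarith [hv.1] : 1 + v ≠ 0)).comp_const_add 1 v
    have hminus := (hasDerivAt_mul_log (by linarith [hv.2] : 1 - v ≠ 0)).comp_const_sub 1 v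
    exact (((hasDerivAt_id v).const_mul 2).sub (hplus.sub hminus)).congr_deriv (by ring)
  have hmono := monotoneOn_of_hasDerivAt_nonneg (convex_Ico 0 1) hderiv (fun v hv => by
    rw [interior_Ico] at hv
    rw [← log_mul (by linarith [hv.1]) (by linarith [hv.2])]
    linarith [log_nonpos (by nlinarith [hv.1, hv.2]) (by nlinarith [hv.1] : (1 + v) * (1 - v) ≤ 1)])
  simpa using hmono (left_mem_Ico.2 one_pos) hu hu.1

lemma log_one_add_add_log_one_sub_le_mul {u : ℝ} (hu : u ∈ Ico 0 1) :
    log (1 + u) + log (1 - u) ≤ log (1 + u) * log (1 - u) := by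
  have hderiv : ∀ v ∈ Ico (0 : ℝ) 1, HasDerivAt
      (fun v => log (1 + v) * log (1 - v) - (log (1 + v) + log (1 - v)))
      ((2 * v - ((1 + v) * log (1 + v) - (1 - v) * log (1 - v))) / ((1 + v) * (1 - v))) v := by
    intro v hv
    have h1 : 1 + v ≠ 0 := by linarith [hv.1]
    have h2 : 1 - v ≠ 0 := by linarith [hv.2]
    have hplus := (hasDerivAt_log h1).comp_const_add 1 v
    have hminus := (hasDerivAt_log h2).comp_const_sub 1 v
    refine ((hplus.mul hminus).sub (hplus.add hminus)).congr_deriv ?_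
    field_simp
    ring
  have hmono := monotoneOn_of_hasDerivAt_nonneg (convex_Ico 0 1) hderiv (fun v hv => by
    rw [interior_Ico] at hv
    have := mul_log_one_add_sub_mul_log_one_sub_le (Ioo_subset_Ico_self hv)
    exact div_nonneg (by linarith) (mul_nonneg (by linarith [hv.1]) (by linarith [hv.2])))
  simpa using hmono (left_mem_Ico.2 one_pos) hu hu.1

-- The integrand of `li` folded about `1`: `t ↦ 1 / log t` on `(0, 1)` is carried onto `(1, 2)`.
noncomputable def symmLogInv (s : ℝ) : ℝ := 1 / log s + 1 / log (2 - s)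

lemma one_le_symmLogInv {s : ℝ} (hs : s ∈ Ioo 1 2) : 1 ≤ symmLogInv s := by
  have ha : 0 < log s := log_pos hs.1
  have hb : log (2 - s) < 0 := log_neg (by linarith [hs.2]) (by linarith [hs.1])
  have key := log_one_add_add_log_one_sub_le_mul (u := s - 1)
    ⟨by linarith [hs.1], by linarith [hs.2]⟩
  rw [add_sub_cancel, show 1 - (s - 1) = 2 - s by ring] at key
  rw [symmLogInv, div_add_div _ _ ha.ne' hb.ne, le_div_iff_of_neg (mul_neg_of_pos_of_neg ha hb)]
  linarith

lemma symmLogInv_le_three {s : ℝ} (hs : s ∈ Ioo 1 2) : symmLogInv s ≤ 3 := by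
  obtain ⟨hs1, hs2⟩ := hs
  have hs0 : 0 < s := by linarith
  have hs2' : 0 < 2 - s := by linarith
  have ha : (s - 1) / s ≤ log s := by
    have := one_sub_inv_le_log_of_pos hs0
    rwa [show 1 - s⁻¹ = (s - 1) / s by field_simp] at this
  have hc : log (2 - s) ≤ 1 - s := by linarith [log_le_sub_one_of_pos hs2']
  have hac : -(s - 1) ^ 2 / (s * (2 - s)) ≤ log s + log (2 - s) := by
    have := one_sub_inv_le_log_of_pos (mul_pos hs0 hs2')
    rw [log_mul hs0.ne' hs2'.ne'] at this
    convert this using 1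
    field_simp
    ring
  have hpos : 0 < log s := log_pos hs1
  have hneg : log (2 - s) < 0 := log_neg hs2' (by linarith)
  rw [symmLogInv, div_add_div _ _ hpos.ne' hneg.ne,
    div_le_iff_of_neg (mul_neg_of_pos_of_neg hpos hneg)]
  -- Near `1` the singularities cancel, leaving at most `1 / (2 - s)`; near `2`, `1 / log s ≤ 3`
  -- and the second term is negative.
  rcases le_or_gt s (3 / 2) with hs32 | hs32
  · have h2s : (s - 1) ^ 2 / (s * (2 - s)) ≤ 2 * ((s - 1) / s * (s - 1)) := by
      rw [div_le_iff₀ (mul_pos hs0 hs2')]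
      field_simp
      nlinarith [sq_nonneg (s - 1)]
    have hprod : (s - 1) / s * (s - 1) ≤ log s * -log (2 - s) :=
      mul_le_mul ha (by linarith) (by linarith) hpos.le
    rw [neg_div] at hac
    nlinarith [mul_pos hpos (neg_pos.2 hneg)]
  · have h13 : 1 / 3 ≤ log s := le_trans (by rw [div_le_div_iff₀ (by norm_num) hs0]; linarith) ha
    nlinarith [mul_le_mul_of_nonpos_right h13 hneg.le]

lemma integrableOn_symmLogInv : IntegrableOn symmLogInv (Icc 1 2) := by
  rw [integrableOn_Icc_iff_integrableOn_Ioo]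
  refine Measure.integrableOn_of_bounded (M := 3) (by simp) (by unfold symmLogInv; fun_prop) ?_
  refine (ae_restrict_iff' measurableSet_Ioo).2 (ae_of_all _ fun s hs => ?_)
  rw [Real.norm_eq_abs, abs_le]
  exact ⟨by linarith [one_le_symmLogInv hs], symmLogInv_le_three hs⟩

lemma intervalIntegrable_symmLogInv : IntervalIntegrable symmLogInv volume 1 2 :=
  (intervalIntegrable_iff_integrableOn_Icc_of_le one_le_two).2 integrableOn_symmLogInv

lemma one_le_integral_symmLogInv : 1 ≤ ∫ s in (1 : ℝ)..2, symmLogInv s :=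
  calc (1 : ℝ) = ∫ _ in (1 : ℝ)..2, (1 : ℝ) := by norm_num
    _ ≤ _ := intervalIntegral.integral_mono_on_of_le_Ioo one_le_two intervalIntegrable_const
      intervalIntegrable_symmLogInv fun _ hs => one_le_symmLogInv hs

lemma integral_symmLogInv_le_three : (∫ s in (1 : ℝ)..2, symmLogInv s) ≤ 3 :=
  calc
    _ ≤ ∫ _ in (1 : ℝ)..2, (3 : ℝ) := intervalIntegral.integral_mono_on_of_le_Ioo one_le_two
      intervalIntegrable_symmLogInv intervalIntegrable_const fun _ hs => symmLogInv_le_three hs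
    _ = 3 := by norm_num

lemma intervalIntegrable_one_div_log {a b : ℝ} (ha : 1 < a) (hb : 1 < b) :
    IntervalIntegrable (fun t => 1 / log t) volume a b := by
  refine ContinuousOn.intervalIntegrable fun t ht => ?_
  have ht : 1 < t := lt_of_lt_of_le (lt_min ha hb) ht.1
  exact (continuousAt_const.div (continuousAt_log (by linarith))
    (log_pos ht).ne').continuousWithinAt

lemma li_eq_integral_symmLogInv_add {x : ℝ} (hx : 2 ≤ x) :
    li x = (∫ s in (1 : ℝ)..2, symmLogInv s) + ∫ t in (2 : ℝ)..x, 1 / log t := by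
  have hfold : ∀ ε ∈ Ioo (0 : ℝ) 1,
      (∫ s in (1 + ε)..2, symmLogInv s) + (∫ t in (2 : ℝ)..x, 1 / log t) =
        (∫ t in (0 : ℝ)..(1 - ε), 1 / log t) + ∫ t in (1 + ε)..x, 1 / log t := by
    rintro ε ⟨hε0, hε1⟩
    have hlog := intervalIntegrable_one_div_log (by linarith : 1 < 1 + ε) one_lt_two
    have hsymm : IntervalIntegrable symmLogInv volume (1 + ε) 2 :=
      intervalIntegrable_symmLogInv.mono_set (by
        rw [uIcc_of_le one_le_two, uIcc_of_le (by linarith)]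
        exact Icc_subset_Icc (by linarith) le_rfl)
    have hrefl : IntervalIntegrable (fun s => 1 / log (2 - s)) volume (1 + ε) 2 := by
      convert hsymm.sub hlog using 1
      ext s
      simp [symmLogInv]
    have hsub : ∫ s in (1 + ε)..2, 1 / log (2 - s) = ∫ t in (0 : ℝ)..(1 - ε), 1 / log t := by
      rw [intervalIntegral.integral_comp_sub_left (fun t => 1 / log t), sub_self,
        show 2 - (1 + ε) = 1 - ε by ring]
    rw [← intervalIntegral.integral_add_adjacent_intervals hlog
        (intervalIntegrable_one_div_log one_lt_two (by linarith)), ← hsub,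
      ← add_assoc, ← intervalIntegral.integral_add hrefl hlog]
    simp only [symmLogInv, add_comm]
  have hcont : ContinuousWithinAt (fun a => ∫ s in a..2, symmLogInv s) (Icc 1 2) 1 := by
    have h := intervalIntegral.continuousOn_primitive_interval_left (a := 1) (b := 2)
      (by rw [uIcc_of_le one_le_two]; exact integrableOn_symmLogInv)
    rw [uIcc_of_le one_le_two] at h
    exact h 1 (left_mem_Icc.2 one_le_two)
  have hshift : Tendsto (fun ε : ℝ => 1 + ε) (𝓝[>] 0) (𝓝[Icc 1 2] 1) := by
    refine tendsto_nhdsWithin_iff.2 ⟨?_, ?_⟩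
    · simpa using ((continuous_const_add (1 : ℝ)).tendsto 0).mono_left nhdsWithin_le_nhds
    · filter_upwards [Ioo_mem_nhdsGT one_pos] with ε hε
      exact ⟨by linarith [hε.1], by linarith [hε.2]⟩
  refine Tendsto.limUnder_eq (((hcont.tendsto.comp hshift).add_const _).congr' ?_)
  filter_upwards [Ioo_mem_nhdsGT one_pos] with ε hε using hfold ε hε

lemma li_two : li 2 = ∫ s in (1 : ℝ)..2, symmLogInv s := by
  simpa using li_eq_integral_symmLogInv_add le_rfl

lemma li_eq_li_two_add {x : ℝ} (hx : 2 ≤ x) : li x = li 2 + ∫ t in (2 : ℝ)..x, 1 / log t := by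
  rw [li_eq_integral_symmLogInv_add hx, li_two]

lemma li_monotoneOn : MonotoneOn li (Ici 2) := by
  intro x hx y hy hxy
  rw [li_eq_li_two_add hx, li_eq_li_two_add hy, add_le_add_iff_left]
  refine intervalIntegral.integral_mono_interval le_rfl hx hxy ?_
    (intervalIntegrable_one_div_log one_lt_two (by linarith [mem_Ici.1 hy]))
  refine (ae_restrict_iff' measurableSet_Ioc).2 (ae_of_all _ fun t ht => ?_)
  exact one_div_nonneg.2 (log_nonneg (by linarith [ht.1]))

lemma li_continuousOn : ContinuousOn li (Ici 2) := by
  intro x hx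
  have h := intervalIntegral.continuousOn_primitive_interval'
    (intervalIntegrable_one_div_log one_lt_two (by linarith [mem_Ici.1 hx] : 1 < x + 1))
    left_mem_uIcc
  rw [uIcc_of_le (by linarith [mem_Ici.1 hx])] at h
  have hIcc : ContinuousWithinAt li (Icc 2 (x + 1)) x :=
    (continuousOn_const.add h).congr (fun y hy => li_eq_li_two_add hy.1) x ⟨hx, by linarith⟩
  refine hIcc.mono_of_mem_nhdsWithin ?_
  rw [← Ici_inter_Iic]
  exact inter_mem_nhdsWithin _ (Iic_mem_nhds (by linarith))

lemma one_add_div_log_le_li {x : ℝ} (hx : 2 ≤ x) : 1 + (x - 2) / log x ≤ li x := by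
  rw [li_eq_li_two_add hx]
  have hint : (x - 2) / log x ≤ ∫ t in (2 : ℝ)..x, 1 / log t :=
    calc
      (x - 2) / log x = ∫ _ in (2 : ℝ)..x, 1 / log x := by simp [div_eq_mul_inv]
      _ ≤ _ := intervalIntegral.integral_mono_on hx intervalIntegrable_const
        (intervalIntegrable_one_div_log one_lt_two (by linarith)) fun t ht =>
          one_div_le_one_div_of_le (log_pos (by linarith [ht.1]))
            (log_le_log (by linarith [ht.1]) ht.2)
  linarith [li_two ▸ one_le_integral_symmLogInv]

lemma lt_li_two_mul_mul_log {y : ℝ} (hy : exp 1 ≤ y) : y < li (2 * y * log y) := by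
  have hy0 : 0 < y := (exp_pos 1).trans_le hy
  have hlog : 1 ≤ log y := (le_log_iff_exp_le hy0).2 hy
  have hy2 : 2 ≤ y := le_trans (by linarith [exp_one_gt_d9]) hy
  set x := 2 * y * log y
  have hx : 2 ≤ x := by nlinarith
  have hlogx : log x ≤ log 2 + 2 * log y - 1 := by
    have : log x = log 2 + log y + log (log y) := by
      rw [log_mul (by positivity) (by linarith), log_mul two_ne_zero hy0.ne']
    linarith [log_le_sub_one_of_pos (by linarith : 0 < log y)]
  have hkey : (y - 1) * log x < x - 2 := by
    have := mul_le_mul_of_nonneg_left hlogx (by linarith : 0 ≤ y - 1)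
    nlinarith [log_two_lt_d9]
  have := one_add_div_log_le_li hx
  rw [← lt_div_iff₀ (log_pos (by linarith))] at hkey
  linarith

theorem liInv_lt (n : ℕ) (hn : 3 ≤ n) :
    liInv n < 2 * n * Real.log n ∧ (n : ℝ) < li (2 * n * Real.log n) := by
  have hn3 : (3 : ℝ) ≤ n := by exact_mod_cast hn
  have he : exp 1 ≤ n := by linarith [exp_one_lt_d9]
  have hx₀ : 2 ≤ 2 * (n : ℝ) * log n := by
    nlinarith [(le_log_iff_exp_le (by linarith)).2 he]
  have hli := lt_li_two_mul_mul_log he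
  refine ⟨?_, hli⟩
  obtain ⟨y, -, hy⟩ := intermediate_value_Icc hx₀ (li_continuousOn.mono Icc_subset_Ici_self)
    ⟨(li_two ▸ integral_symmLogInv_le_three).trans hn3, hli.le⟩
  have hinv : li (liInv n) = n := Function.invFun_eq ⟨y, hy⟩
  by_contra! hge
  linarith [li_monotoneOn hx₀ (hx₀.trans hge) hge]
end
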